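/- arXiv:cs/0002008 — 2 statements merged into one kernel-verified Lean document; each statement's English description precedes it below -/
import Mathlib

section
/- Given a simulation f : S ⇒ T between automata S, T : X×Y → Y×Z with initial states, the restriction of f to the reachable subautomata of the feedbacks defines a simulation fb_Y f : fb_Y S ⇒ fb_Y T (the feedbacks being equipped with the same initial states). -/
/-- An automaton with boundary `S : X → Y`, where the action sets `X`, `Y`
have trivial (reflexive) actions `eX`, `eY`. -/
structure Aut (X Y : Type) (eX : X) (eY : Y) where
  State : Type
  Motion : Type
  src : Motion → State
  tgt : Motion → State
  refl : State → Motion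
  refl_src : ∀ v, src (refl v) = v
  refl_tgt : ∀ v, tgt (refl v) = v
  labL : Motion → X
  labR : Motion → Y
  labL_refl : ∀ v, labL (refl v) = eX
  labR_refl : ∀ v, labR (refl v) = eY

namespace Aut

variable {X Y Z W : Type} {eX : X} {eY : Y} {eZ : Z} {eW : W}

/-- The binding `S·T` of automata `S : X → Y` and `T : Y → Z`. -/
def bind (S : Aut X Y eX eY) (T : Aut Y Z eY eZ) : Aut X Z eX eZ where
  State := S.State × T.State
  Motion := {p : S.Motion × T.Motion // S.labR p.1 = T.labL p.2}
  src p := (S.src p.val.1, T.src p.val.2)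
  tgt p := (S.tgt p.val.1, T.tgt p.val.2)
  refl v := ⟨(S.refl v.1, T.refl v.2), by rw [S.labR_refl, T.labL_refl]⟩
  refl_src v := by simp [S.refl_src, T.refl_src]
  refl_tgt v := by simp [S.refl_tgt, T.refl_tgt]
  labL p := S.labL p.val.1
  labR p := T.labR p.val.2
  labL_refl v := S.labL_refl v.1
  labR_refl v := T.labR_refl v.2

/-- The product `S×T` of automata `S : X → Y` and `T : Z → W`. -/
def prod (S : Aut X Y eX eY) (T : Aut Z W eZ eW) :
    Aut (X × Z) (Y × W) (eX, eZ) (eY, eW) where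
  State := S.State × T.State
  Motion := S.Motion × T.Motion
  src p := (S.src p.1, T.src p.2)
  tgt p := (S.tgt p.1, T.tgt p.2)
  refl v := (S.refl v.1, T.refl v.2)
  refl_src v := by simp [S.refl_src, T.refl_src]
  refl_tgt v := by simp [S.refl_tgt, T.refl_tgt]
  labL p := (S.labL p.1, T.labL p.2)
  labR p := (S.labR p.1, T.labR p.2)
  labL_refl v := by simp [S.labL_refl, T.labL_refl]
  labR_refl v := by simp [S.labR_refl, T.labR_refl]

/-- The feedback `fb_Y S` of an automaton `S : X×Y → Y×Z`. -/
def fb (S : Aut (X × Y) (Y × Z) (eX, eY) (eY, eZ)) : Aut X Z eX eZ where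
  State := S.State
  Motion := {e : S.Motion // (S.labL e).2 = (S.labR e).1}
  src e := S.src e.val
  tgt e := S.tgt e.val
  refl v := ⟨S.refl v, by rw [S.labL_refl, S.labR_refl]⟩
  refl_src v := S.refl_src v
  refl_tgt v := S.refl_tgt v
  labL e := (S.labL e.val).1
  labR e := (S.labR e.val).2
  labL_refl v := by simp [S.labL_refl]
  labR_refl v := by simp [S.labR_refl]

/-- The identity automaton on an action set `X`. -/
def ident (X : Type) (eX : X) : Aut X X eX eX where
  State := PUnit
  Motion := X
  src _ := PUnit.unit
  tgt _ := PUnit.unit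
  refl _ := eX
  refl_src _ := rfl
  refl_tgt _ := rfl
  labL x := x
  labR x := x
  labL_refl _ := rfl
  labR_refl _ := rfl

end Aut

/-- `IsPath A v l w` : the list of motions `l` is a finite behaviour of `A`
from the state `v` ending at the state `w`. -/
def IsPath {X Y : Type} {eX : X} {eY : Y} (A : Aut X Y eX eY) :
    A.State → List A.Motion → A.State → Prop
  | v, [], w => v = w
  | v, e :: l, w => A.src e = v ∧ IsPath A (A.tgt e) l w

/-- `w` is reachable from `v`: there is a finite (possibly empty) behaviour from `v` to `w`. -/
def Reaches {X Y : Type} {eX : X} {eY : Y} (A : Aut X Y eX eY) (v w : A.State) : Prop :=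
  ∃ l, IsPath A v l w

/-- A state is a deadlock if the only motion out of it is the reflexive motion. -/
def Deadlock {X Y : Type} {eX : X} {eY : Y} (A : Aut X Y eX eY) (v : A.State) : Prop :=
  ∀ e, A.src e = v → e = A.refl v

/-- A behaviour (finite or infinite) of `A` from the state `v0`, encoded as a
finite-or-infinite sequence `Stream'.Seq` of motions. -/
def IsBehaviour {X Y : Type} {eX : X} {eY : Y} (A : Aut X Y eX eY) (v0 : A.State)
    (s : Stream'.Seq A.Motion) : Prop :=
  (∀ e, s.get? 0 = some e → A.src e = v0) ∧
  (∀ k e f, s.get? k = some e → s.get? (k + 1) = some f → A.src f = A.tgt e)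

/-- A comparison of automata: maps on states and motions preserving sources,
targets, reflexive motions and boundary labels. -/
structure Comparison {X Y : Type} {eX : X} {eY : Y} (S T : Aut X Y eX eY) where
  onState : S.State → T.State
  onMotion : S.Motion → T.Motion
  src_eq : ∀ e, T.src (onMotion e) = onState (S.src e)
  tgt_eq : ∀ e, T.tgt (onMotion e) = onState (S.tgt e)
  refl_eq : ∀ v, onMotion (S.refl v) = T.refl (onState v)
  labL_eq : ∀ e, T.labL (onMotion e) = S.labL e
  labR_eq : ∀ e, T.labR (onMotion e) = S.labR e

/-- An isomorphism of automata: bijections on states and motions preserving sources,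
targets, reflexive motions and boundary labels. -/
structure AutIso {X Y : Type} {eX : X} {eY : Y} (S T : Aut X Y eX eY) where
  stateEquiv : S.State ≃ T.State
  motionEquiv : S.Motion ≃ T.Motion
  src_eq : ∀ e, T.src (motionEquiv e) = stateEquiv (S.src e)
  tgt_eq : ∀ e, T.tgt (motionEquiv e) = stateEquiv (S.tgt e)
  refl_eq : ∀ v, motionEquiv (S.refl v) = T.refl (stateEquiv v)
  labL_eq : ∀ e, T.labL (motionEquiv e) = S.labL e
  labR_eq : ∀ e, T.labR (motionEquiv e) = S.labR e

/-- The reachable subautomaton `r(A)` of `A` with initial state `v0`. -/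
def reach {X Y : Type} {eX : X} {eY : Y} (A : Aut X Y eX eY) (v0 : A.State) :
    Aut X Y eX eY where
  State := {v : A.State // Reaches A v0 v}
  Motion := {e : A.Motion // Reaches A v0 (A.src e) ∧ Reaches A v0 (A.tgt e)}
  src e := ⟨A.src e.val, e.property.1⟩
  tgt e := ⟨A.tgt e.val, e.property.2⟩
  refl v := ⟨A.refl v.val, by rw [A.refl_src, A.refl_tgt]; exact ⟨v.property, v.property⟩⟩
  refl_src v := Subtype.ext (A.refl_src v.val)
  refl_tgt v := Subtype.ext (A.refl_tgt v.val)
  labL e := A.labL e.val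
  labR e := A.labR e.val
  labL_refl v := A.labL_refl v.val
  labR_refl v := A.labR_refl v.val

/-- The initial state of `A`, as a state of the reachable subautomaton `r(A)`. -/
def reachInit {X Y : Type} {eX : X} {eY : Y} (A : Aut X Y eX eY) (v0 : A.State) :
    (reach A v0).State :=
  ⟨v0, ⟨[], rfl⟩⟩

/-- A simulation `S ⇒ T` of automata with initial states: a comparison
`r(S) → r(T)` preserving the initial state and satisfying the lifting property. -/
structure Simulation {X Y : Type} {eX : X} {eY : Y} (S T : Aut X Y eX eY)
    (v0 : S.State) (w0 : T.State) where
  comp : Comparison (reach S v0) (reach T w0)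
  init : (comp.onState (reachInit S v0)).val = w0
  lift : ∀ (v : (reach S v0).State) (e : (reach T w0).Motion),
      (reach T w0).src e = comp.onState v →
      ∃ (l : List ((reach S v0).Motion)) (e' : (reach S v0).Motion)
        (v' : (reach S v0).State),
        IsPath (reach S v0) v (l ++ [e']) v' ∧
        (∀ m ∈ l, comp.onMotion m = (reach T w0).refl (comp.onState v)) ∧
        comp.onMotion e' = e

/-! A motion of `S` satisfies the feedback condition iff its image under `f` does, since `f`
preserves labels; hence `f` maps the reachable part of `fb_Y S` into that of `fb_Y T`. A lift
under `f` of a feedback motion `e` passes through motions sent to reflexive ones, which carry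
trivial labels, and ends with a motion carrying the labels of `e`: all of them satisfy the
feedback condition, so the lift is a behaviour of `fb_Y S`. -/

section Reachability

variable {X Y : Type} {eX : X} {eY : Y} {A : Aut X Y eX eY}

theorem IsPath.append {v w u : A.State} {l l' : List A.Motion}
    (h : IsPath A v l w) (h' : IsPath A w l' u) : IsPath A v (l ++ l') u := by
  induction l generalizing v with
  | nil => cases h; exact h'
  | cons e l ih => exact ⟨h.1, ih h.2⟩

theorem Reaches.tgt {v : A.State} {e : A.Motion} (h : Reaches A v (A.src e)) :
    Reaches A v (A.tgt e) :=
  let ⟨l, hl⟩ := h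
  ⟨l ++ [e], hl.append ⟨rfl, rfl⟩⟩

@[elab_as_elim]
theorem Reaches.induction_on {v0 : A.State} {P : A.State → Prop} {v : A.State}
    (hv : Reaches A v0 v) (refl : P v0)
    (step : ∀ e, Reaches A v0 (A.src e) → P (A.src e) → P (A.tgt e)) : P v := by
  obtain ⟨l, hl⟩ := hv
  suffices ∀ l u, Reaches A v0 u → P u → IsPath A u l v → P v from this l v0 ⟨[], rfl⟩ refl hl
  intro l
  induction l with
  | nil => rintro u - hu rfl; exact hu
  | cons e l ih =>
    rintro u hu hPu ⟨rfl, hl⟩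
    exact ih _ hu.tgt (step e hu hPu) hl

end Reachability

namespace Aut

variable {X Y Z : Type} {eX : X} {eY : Y} {eZ : Z}
  {S T : Aut (X × Y) (Y × Z) (eX, eY) (eY, eZ)} {v0 : S.State} {w0 : T.State}

theorem reaches_of_reaches_fb {v : S.State} (h : Reaches S.fb v0 v) : Reaches S v0 v :=
  h.induction_on ⟨[], rfl⟩ fun e _ he => Reaches.tgt (e := e.val) he

def reachFbState (q : (reach S.fb v0).State) : (reach S v0).State :=
  ⟨q.val, reaches_of_reaches_fb q.property⟩

def reachFbMotion (m : (reach S.fb v0).Motion) : (reach S v0).Motion :=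
  ⟨m.val.val, reaches_of_reaches_fb m.property.1, reaches_of_reaches_fb m.property.2⟩

theorem exists_isPath_reach_fb {v w : (reach S v0).State} {l : List (reach S v0).Motion}
    (hl : IsPath (reach S v0) v l w)
    (hfb : ∀ m ∈ l, ((reach S v0).labL m).2 = ((reach S v0).labR m).1)
    (hv : Reaches S.fb v0 v.val) :
    ∃ (hw : Reaches S.fb v0 w.val) (l' : List (reach S.fb v0).Motion),
      IsPath (reach S.fb v0) ⟨v.val, hv⟩ l' ⟨w.val, hw⟩ ∧ l'.map reachFbMotion = l := by
  induction l generalizing v with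
  | nil => cases hl; exact ⟨hv, [], rfl, rfl⟩
  | cons m l ih =>
    obtain ⟨rfl, hl⟩ := hl
    let m' : S.fb.Motion := ⟨m.val, hfb m List.mem_cons_self⟩
    have hsrc : Reaches S.fb v0 (S.fb.src m') := hv
    obtain ⟨hw, l', hl', rfl⟩ :=
      ih hl (fun n hn => hfb n (List.mem_cons_of_mem _ hn)) hsrc.tgt
    exact ⟨hw, ⟨m', hsrc, hsrc.tgt⟩ :: l', ⟨rfl, hl'⟩, rfl⟩

end Aut

namespace Comparison

variable {X Y Z : Type} {eX : X} {eY : Y} {eZ : Z}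
  {A B : Aut (X × Y) (Y × Z) (eX, eY) (eY, eZ)}

theorem labL_snd_eq_labR_fst_iff (g : Comparison A B) (e : A.Motion) :
    (B.labL (g.onMotion e)).2 = (B.labR (g.onMotion e)).1 ↔ (A.labL e).2 = (A.labR e).1 := by
  rw [g.labL_eq, g.labR_eq]

end Comparison

namespace Simulation

open Aut

variable {X Y Z : Type} {eX : X} {eY : Y} {eZ : Z}
  {S T : Aut (X × Y) (Y × Z) (eX, eY) (eY, eZ)} {v0 : S.State} {w0 : T.State}
  (f : Simulation S T v0 w0)

theorem reaches_fb_onState {v : S.State} (hv : Reaches S.fb v0 v) (hvS : Reaches S v0 v) :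
    Reaches T.fb w0 (f.comp.onState ⟨v, hvS⟩).val := by
  revert hvS
  refine hv.induction_on (fun _ => ?_) fun e hsrc ih hvS => ?_
  · rw [show (f.comp.onState ⟨v0, _⟩).val = w0 from f.init]
    exact ⟨[], rfl⟩
  let m : (reach S v0).Motion := ⟨e.val, reaches_of_reaches_fb hsrc, hvS⟩
  let n : T.fb.Motion := ⟨(f.comp.onMotion m).val, (f.comp.labL_snd_eq_labR_fst_iff m).mpr e.property⟩
  have hn : Reaches T.fb w0 (T.fb.src n) := by
    rw [show T.fb.src n = _ from congrArg Subtype.val (f.comp.src_eq m)]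
    exact ih _
  exact congrArg Subtype.val (f.comp.tgt_eq m) ▸ hn.tgt

theorem reaches_fb_src_onMotion {m : (reach S v0).Motion} (h : Reaches S.fb v0 (S.src m.val)) :
    Reaches T.fb w0 (T.src (f.comp.onMotion m).val) := by
  rw [show T.src _ = _ from congrArg Subtype.val (f.comp.src_eq m)]
  exact f.reaches_fb_onState h _

theorem reaches_fb_tgt_onMotion {m : (reach S v0).Motion} (h : Reaches S.fb v0 (S.tgt m.val)) :
    Reaches T.fb w0 (T.tgt (f.comp.onMotion m).val) := by
  rw [show T.tgt _ = _ from congrArg Subtype.val (f.comp.tgt_eq m)]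
  exact f.reaches_fb_onState h _

def fbOnState (q : (reach S.fb v0).State) : (reach T.fb w0).State :=
  ⟨(f.comp.onState (reachFbState q)).val, f.reaches_fb_onState q.property _⟩

def fbOnMotion (m : (reach S.fb v0).Motion) : (reach T.fb w0).Motion :=
  ⟨⟨(f.comp.onMotion (reachFbMotion m)).val,
      (f.comp.labL_snd_eq_labR_fst_iff (reachFbMotion m)).mpr m.val.property⟩,
    f.reaches_fb_src_onMotion m.property.1, f.reaches_fb_tgt_onMotion m.property.2⟩

theorem fbOnMotion_eq {m : (reach S.fb v0).Motion} {e : (reach T.fb w0).Motion}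
    (h : f.comp.onMotion (reachFbMotion m) = reachFbMotion e) : f.fbOnMotion m = e :=
  Subtype.ext (Subtype.ext (congrArg Subtype.val h :))

def fbComp : Comparison (reach S.fb v0) (reach T.fb w0) where
  onState := f.fbOnState
  onMotion := f.fbOnMotion
  src_eq m := Subtype.ext (congrArg Subtype.val (f.comp.src_eq (reachFbMotion m)) :)
  tgt_eq m := Subtype.ext (congrArg Subtype.val (f.comp.tgt_eq (reachFbMotion m)) :)
  refl_eq q := Subtype.ext (Subtype.ext (congrArg Subtype.val (f.comp.refl_eq (reachFbState q)) :))
  labL_eq m := congrArg Prod.fst (f.comp.labL_eq (reachFbMotion m))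
  labR_eq m := congrArg Prod.snd (f.comp.labR_eq (reachFbMotion m))

def fb : Simulation S.fb T.fb v0 w0 where
  comp := f.fbComp
  init := f.init
  lift v e hsrc := by
    obtain ⟨l, e', v', hpath, hrefl, he'⟩ :=
      f.lift (reachFbState v) (reachFbMotion e) (Subtype.ext (congrArg Subtype.val hsrc :))
    have hfb : ∀ m ∈ l ++ [e'], ((reach S v0).labL m).2 = ((reach S v0).labR m).1 := by
      intro m hm
      refine (f.comp.labL_snd_eq_labR_fst_iff m).mp ?_
      rcases List.mem_append.mp hm with hm | hm
      · rw [hrefl m hm, (reach T w0).labL_refl, (reach T w0).labR_refl]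
      · rw [List.mem_singleton.mp hm, he']
        exact e.val.property
    obtain ⟨hv', L, hL, hmap⟩ := exists_isPath_reach_fb hpath hfb v.property
    obtain ⟨l', l₂, rfl, rfl, hl₂⟩ := List.map_eq_append_iff.mp hmap
    obtain ⟨e'', rfl, rfl⟩ := List.map_eq_singleton_iff.mp hl₂
    exact ⟨l', e'', _, hL, fun m hm => f.fbOnMotion_eq (hrefl _ (List.mem_map_of_mem hm)),
      f.fbOnMotion_eq he'⟩

end Simulation

/-- A simulation `f : S ⇒ T` between automata `S, T : X×Y → Y×Z` restricts
to a simulation `fb_Y f : fb_Y S ⇒ fb_Y T` between the feedbacks (with the same initial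
states). -/
theorem simulation_fb {X Y Z : Type} {eX : X} {eY : Y} {eZ : Z}
    (S T : Aut (X × Y) (Y × Z) (eX, eY) (eY, eZ))
    (v0 : S.State) (w0 : T.State)
    (f : Simulation S T v0 w0) :
    ∃ h : Simulation S.fb T.fb v0 w0,
      (∀ (q : (reach S.fb v0).State) (h1 : Reaches S v0 q.val),
        (h.comp.onState q).val = (f.comp.onState ⟨q.val, h1⟩).val) ∧
      (∀ (m : (reach S.fb v0).Motion)
        (h1 : Reaches S v0 (S.src m.val.val) ∧ Reaches S v0 (S.tgt m.val.val)),
        ((h.comp.onMotion m).val).val = (f.comp.onMotion ⟨m.val.val, h1⟩).val) :=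
  ⟨f.fb, fun _ _ => rfl, fun _ _ => rfl⟩
end

section
/- Given simulations f : S ⇒ T between automata S, T : X → Y with initial states and g : U ⇒ V between automata U, V : W → Z with initial states, the componentwise maps (v,w) ↦ (f(v), g(w)) on states and (e,e') ↦ (f(e), g(e')) on motions define a simulation f×g : S×U ⇒ T×V between the products (equipped with the pairs of initial states). -/
/-! The states and motions reachable in `S×U` are exactly the pairs of reachable ones, so
`r(S×U) ≅ r(S)×r(U)`, and `f×g` is the product comparison `f.comp × g.comp` transported along
these isomorphisms. The lifting property survives transport, and it holds for a product: a motion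
`(e₁, e₂)` out of `(f v, g u)` is lifted by first running the silent part of the lift of `e₁` while
`U` idles at `u`, then the silent part of the lift of `e₂` while `S` idles at the source of the
last motion of the first lift, and finally taking the two last motions together. -/

section

variable {X Y Z W X' Y' : Type} {eX : X} {eY : Y} {eZ : Z} {eW : W} {eX' : X'} {eY' : Y'}

theorem isPath_append_iff {A : Aut X Y eX eY} {v x : A.State} {l l' : List A.Motion} :
    IsPath A v (l ++ l') x ↔ ∃ w, IsPath A v l w ∧ IsPath A w l' x := by
  induction l generalizing v with
  | nil => simp [IsPath]
  | cons e l ih => simp [IsPath, ih, and_assoc]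

theorem isPath_concat_iff {A : Aut X Y eX eY} {v w : A.State} {l : List A.Motion}
    {e : A.Motion} : IsPath A v (l ++ [e]) w ↔ IsPath A v l (A.src e) ∧ A.tgt e = w := by
  simp [isPath_append_iff, IsPath]

theorem IsPath.map {A : Aut X Y eX eY} {B : Aut X' Y' eX' eY'}
    (φ : A.State → B.State) (ψ : A.Motion → B.Motion)
    (hsrc : ∀ e, B.src (ψ e) = φ (A.src e)) (htgt : ∀ e, B.tgt (ψ e) = φ (A.tgt e))
    {v w : A.State} {l : List A.Motion} (h : IsPath A v l w) :
    IsPath B (φ v) (l.map ψ) (φ w) := by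
  induction l generalizing v with
  | nil => exact congrArg φ h
  | cons e l ih => exact ⟨by rw [hsrc, h.1], by rw [htgt]; exact ih h.2⟩

theorem IsPath.prod_left {A : Aut X Y eX eY} {C : Aut Z W eZ eW} {v w : A.State}
    {l : List A.Motion} (h : IsPath A v l w) (u : C.State) :
    IsPath (A.prod C) (v, u) (l.map (·, C.refl u)) (w, u) :=
  h.map (B := A.prod C) (·, u) (·, C.refl u) (fun _ => Prod.ext rfl (C.refl_src u))
    (fun _ => Prod.ext rfl (C.refl_tgt u))

theorem IsPath.prod_right {A : Aut X Y eX eY} {C : Aut Z W eZ eW} {v w : C.State}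
    {l : List C.Motion} (h : IsPath C v l w) (a : A.State) :
    IsPath (A.prod C) (a, v) (l.map (A.refl a, ·)) (a, w) :=
  h.map (B := A.prod C) (a, ·) (A.refl a, ·) (fun _ => Prod.ext (A.refl_src a) rfl)
    (fun _ => Prod.ext (A.refl_tgt a) rfl)

theorem reaches_prod_iff {A : Aut X Y eX eY} {C : Aut Z W eZ eW} {p q : (A.prod C).State} :
    Reaches (A.prod C) p q ↔ Reaches A p.1 q.1 ∧ Reaches C p.2 q.2 := by
  constructor
  · rintro ⟨l, hl⟩
    exact ⟨⟨_, hl.map Prod.fst Prod.fst (fun _ => rfl) (fun _ => rfl)⟩,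
      ⟨_, hl.map Prod.snd Prod.snd (fun _ => rfl) (fun _ => rfl)⟩⟩
  · rintro ⟨⟨l₁, h₁⟩, ⟨l₂, h₂⟩⟩
    exact ⟨_, isPath_append_iff.2 ⟨_, h₁.prod_left p.2, h₂.prod_right q.1⟩⟩

@[simps]
def AutIso.symm {A B : Aut X Y eX eY} (i : AutIso A B) : AutIso B A where
  stateEquiv := i.stateEquiv.symm
  motionEquiv := i.motionEquiv.symm
  src_eq e := by rw [Equiv.eq_symm_apply, ← i.src_eq, Equiv.apply_symm_apply]
  tgt_eq e := by rw [Equiv.eq_symm_apply, ← i.tgt_eq, Equiv.apply_symm_apply]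
  refl_eq v := by rw [Equiv.symm_apply_eq, i.refl_eq, Equiv.apply_symm_apply]
  labL_eq e := by rw [← i.labL_eq, Equiv.apply_symm_apply]
  labR_eq e := by rw [← i.labR_eq, Equiv.apply_symm_apply]

def reachProdIso (A : Aut X Y eX eY) (C : Aut Z W eZ eW) (a₀ : A.State) (c₀ : C.State) :
    AutIso (reach (A.prod C) (a₀, c₀)) ((reach A a₀).prod (reach C c₀)) where
  stateEquiv :=
    { toFun q := (⟨q.1.1, (reaches_prod_iff.1 q.2).1⟩, ⟨q.1.2, (reaches_prod_iff.1 q.2).2⟩)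
      invFun p := ⟨(p.1.1, p.2.1), reaches_prod_iff.2 ⟨p.1.2, p.2.2⟩⟩
      left_inv _ := rfl
      right_inv _ := rfl }
  motionEquiv :=
    { toFun e := (⟨e.1.1, (reaches_prod_iff.1 e.2.1).1, (reaches_prod_iff.1 e.2.2).1⟩,
        ⟨e.1.2, (reaches_prod_iff.1 e.2.1).2, (reaches_prod_iff.1 e.2.2).2⟩)
      invFun p := ⟨(p.1.1, p.2.1), reaches_prod_iff.2 ⟨p.1.2.1, p.2.2.1⟩,
        reaches_prod_iff.2 ⟨p.1.2.2, p.2.2.2⟩⟩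
      left_inv _ := rfl
      right_inv _ := rfl }
  src_eq _ := rfl
  tgt_eq _ := rfl
  refl_eq _ := rfl
  labL_eq _ := rfl
  labR_eq _ := rfl

namespace Comparison

def prod {A B : Aut X Y eX eY} {C D : Aut Z W eZ eW} (c : Comparison A B)
    (d : Comparison C D) : Comparison (A.prod C) (B.prod D) where
  onState p := (c.onState p.1, d.onState p.2)
  onMotion e := (c.onMotion e.1, d.onMotion e.2)
  src_eq e := Prod.ext (c.src_eq e.1) (d.src_eq e.2)
  tgt_eq e := Prod.ext (c.tgt_eq e.1) (d.tgt_eq e.2)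
  refl_eq v := Prod.ext (c.refl_eq v.1) (d.refl_eq v.2)
  labL_eq e := Prod.ext (c.labL_eq e.1) (d.labL_eq e.2)
  labR_eq e := Prod.ext (c.labR_eq e.1) (d.labR_eq e.2)

def congr {A A' B B' : Aut X Y eX eY} (c : Comparison A B) (i : AutIso A' A)
    (j : AutIso B B') : Comparison A' B' where
  onState v := j.stateEquiv (c.onState (i.stateEquiv v))
  onMotion e := j.motionEquiv (c.onMotion (i.motionEquiv e))
  src_eq e := by rw [j.src_eq, c.src_eq, i.src_eq]
  tgt_eq e := by rw [j.tgt_eq, c.tgt_eq, i.tgt_eq]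
  refl_eq v := by rw [i.refl_eq, c.refl_eq, j.refl_eq]
  labL_eq e := by rw [j.labL_eq, c.labL_eq, i.labL_eq]
  labR_eq e := by rw [j.labR_eq, c.labR_eq, i.labR_eq]

/-- The lifting property of `Simulation.lift`, for a comparison of arbitrary automata. -/
def Lifts {A B : Aut X Y eX eY} (c : Comparison A B) : Prop :=
  ∀ (v : A.State) (e : B.Motion), B.src e = c.onState v →
    ∃ (l : List A.Motion) (e' : A.Motion) (v' : A.State),
      IsPath A v (l ++ [e']) v' ∧ (∀ m ∈ l, c.onMotion m = B.refl (c.onState v)) ∧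
      c.onMotion e' = e

theorem Lifts.prod {A B : Aut X Y eX eY} {C D : Aut Z W eZ eW} {c : Comparison A B}
    {d : Comparison C D} (hc : c.Lifts) (hd : d.Lifts) : (c.prod d).Lifts := by
  rintro ⟨v₁, v₂⟩ ⟨e₁, e₂⟩ hsrc
  obtain ⟨hsrc₁, hsrc₂⟩ : B.src e₁ = c.onState v₁ ∧ D.src e₂ = d.onState v₂ :=
    Prod.ext_iff.1 hsrc
  obtain ⟨l₁, e₁', v₁', hp₁, hl₁, he₁⟩ := hc v₁ e₁ hsrc₁
  obtain ⟨l₂, e₂', v₂', hp₂, hl₂, he₂⟩ := hd v₂ e₂ hsrc₂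
  rw [isPath_concat_iff] at hp₁ hp₂
  refine ⟨l₁.map (·, C.refl v₂) ++ l₂.map (A.refl (A.src e₁'), ·), (e₁', e₂'), (v₁', v₂'),
    ?_, ?_, Prod.ext he₁ he₂⟩
  · refine isPath_concat_iff.2 ⟨isPath_append_iff.2 ⟨_, hp₁.1.prod_left v₂, hp₂.1.prod_right _⟩,
      Prod.ext hp₁.2 hp₂.2⟩
  · have hsrc₁' : c.onState (A.src e₁') = c.onState v₁ := by rw [← c.src_eq, he₁, hsrc₁]
    intro m hm
    rcases List.mem_append.1 hm with hm | hm <;> obtain ⟨m', hm', rfl⟩ := List.mem_map.1 hm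
    · exact Prod.ext (hl₁ m' hm') (d.refl_eq v₂)
    · exact Prod.ext ((c.refl_eq _).trans (congrArg B.refl hsrc₁')) (hl₂ m' hm')

theorem Lifts.congr {A A' B B' : Aut X Y eX eY} {c : Comparison A B} (hc : c.Lifts)
    (i : AutIso A' A) (j : AutIso B B') : (c.congr i j).Lifts := by
  intro v e hsrc
  have hsrc' : B.src (j.motionEquiv.symm e) = c.onState (i.stateEquiv v) := by
    rw [← Equiv.apply_eq_iff_eq j.stateEquiv, ← j.src_eq, Equiv.apply_symm_apply]
    exact hsrc
  obtain ⟨l, e', v', hp, hl, he⟩ := hc _ _ hsrc'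
  refine ⟨l.map i.motionEquiv.symm, i.motionEquiv.symm e', i.stateEquiv.symm v', ?_, ?_, ?_⟩
  · simpa using hp.map _ _ i.symm.src_eq i.symm.tgt_eq
  · intro m hm
    obtain ⟨m', hm', rfl⟩ := List.mem_map.1 hm
    simp [Comparison.congr, hl m' hm', j.refl_eq]
  · simp [Comparison.congr, he]

end Comparison

def Simulation.prod {S T : Aut X Y eX eY} {U V : Aut Z W eZ eW} {v₀ : S.State} {w₀ : T.State}
    {u₀ : U.State} {x₀ : V.State} (f : Simulation S T v₀ w₀) (g : Simulation U V u₀ x₀) :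
    Simulation (S.prod U) (T.prod V) (v₀, u₀) (w₀, x₀) where
  comp := (f.comp.prod g.comp).congr (reachProdIso S U v₀ u₀) (reachProdIso T V w₀ x₀).symm
  init := Prod.ext f.init g.init
  lift := (Comparison.Lifts.prod f.lift g.lift).congr _ _

end

/-- The componentwise maps of simulations `f : S ⇒ T` and `g : U ⇒ V`
define a simulation `f×g : S×U ⇒ T×V` between the products, equipped with the pairs of
initial states. -/
theorem simulation_prod {X Y W Z : Type} {eX : X} {eY : Y} {eW : W} {eZ : Z}
    (S T : Aut X Y eX eY) (U V : Aut W Z eW eZ)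
    (v0 : S.State) (w0 : T.State) (u0 : U.State) (x0 : V.State)
    (f : Simulation S T v0 w0) (g : Simulation U V u0 x0) :
    ∃ h : Simulation (S.prod U) (T.prod V) (v0, u0) (w0, x0),
      (∀ (q : (reach (S.prod U) (v0, u0)).State)
        (h1 : Reaches S v0 q.val.1) (h2 : Reaches U u0 q.val.2),
        (h.comp.onState q).val =
          ((f.comp.onState ⟨q.val.1, h1⟩).val, (g.comp.onState ⟨q.val.2, h2⟩).val)) ∧
      (∀ (m : (reach (S.prod U) (v0, u0)).Motion)
        (h1 : Reaches S v0 (S.src m.val.1) ∧ Reaches S v0 (S.tgt m.val.1))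
        (h2 : Reaches U u0 (U.src m.val.2) ∧ Reaches U u0 (U.tgt m.val.2)),
        (h.comp.onMotion m).val =
          ((f.comp.onMotion ⟨m.val.1, h1⟩).val, (g.comp.onMotion ⟨m.val.2, h2⟩).val)) :=
  ⟨f.prod g, fun _ _ _ => rfl, fun _ _ _ => rfl⟩
end
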